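/- Abstract Singleton bound: Under the hypotheses of the key linear-programming inequality, with α_{i,j} = (C(n-i, d_z - 1)/C(n, n - d_z + 1)) * (C(n-j, d_x - 1)/C(n, n - d_x + 1)) and f(x,y) = 2^(2n - d_x - d_z + 2) * ∏_{r = d_x}^{n}(1 - x/r) * ∏_{s = d_z}^{n}(1 - y/s), and assuming d_x ≤ n/2 + 1 and d_z ≤ n/2 + 1, one concludes K ≤ 2^(n - d_x - d_z + 2). In particular, if K = 2^k then n ≥ k + d_x + d_z - 2. -/

import Mathlib

/-!
The Krawtchouk numbers `P_k(s)` are the coefficients of `(1 - z)^s (1 + z)^(n - s)`, so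
`∑_k P_k(s) (1 + t)^(n - k) = t^s (2 + t)^(n - s)`; reading off the coefficient of `t^a` shows
that the Krawtchouk transform of the weight `i ↦ C(n - i, a)` is `s ↦ 2^(n - a) C(n - s, n - a)`,
which vanishes for `s > a`. Pairing (d) with the product weights `α_{i,j}` of the paper therefore
gives `∑ α C = (1 / (2^n K)) ∑ f Cp`, where `f` is supported on the corner `r < d_x`, `s < d_z`
and is there at most `2^(2n - d_x - d_z + 2) α`, a binomial inequality valid as
`d_x + d_z ≤ n + 2`.
By (a) and (c) the corner sum `W = ∑_{corner} α Cp` is at most `∑ α C`, hence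
`W ≤ 2^(n - d_x - d_z + 2) W / K`, and `W > 0` because `Cp_{0,0} = 1`.
-/

/-- Binary Krawtchouk polynomial (q = 2) with parameter `n`, evaluated at a
natural number argument `x`. -/
def kraw (n k x : ℕ) : ℤ :=
  ∑ j ∈ Finset.range (k + 1),
    (-1 : ℤ) ^ j * (Nat.choose x j : ℤ) * (Nat.choose (n - x) (k - j) : ℤ)

open Polynomial Finset

theorem Polynomial.coeff_one_sub_X_pow {R : Type*} [CommRing R] (s j : ℕ) :
    ((1 - X : R[X]) ^ s).coeff j = (-1) ^ j * s.choose j := by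
  rw [sub_eq_neg_add, add_pow, finsetSum_coeff]
  simp_rw [neg_pow (X : R[X]), one_pow, mul_one, ← C_1, ← C_neg, ← C_pow, ← C_eq_natCast,
    mul_comm _ (C _), ← mul_assoc, ← C_mul, coeff_C_mul_X_pow]
  rw [Finset.sum_ite_eq]
  split_ifs with h
  · ring
  · rw [Nat.choose_eq_zero_of_lt (by simpa using h)]; simp

theorem Polynomial.reflect_pow {R : Type*} [Semiring R] {p : R[X]} {d : ℕ} (hp : p.natDegree ≤ d)
    (k : ℕ) :
    reflect (k * d) (p ^ k) = reflect d p ^ k := by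
  induction k with
  | zero => simp [reflect_one]
  | succ k ih =>
    rw [pow_succ, Nat.succ_mul, reflect_mul _ _ (natDegree_pow_le_of_le k hp) hp, ih, pow_succ]

lemma kraw_eq_coeff (n k s : ℕ) :
    kraw n k s = ((1 - X) ^ s * (1 + X) ^ (n - s) : ℤ[X]).coeff k := by
  rw [coeff_mul, Nat.sum_antidiagonal_eq_sum_range_succ_mk, kraw]
  simp [coeff_one_sub_X_pow, coeff_one_add_X_pow]

lemma reflect_one_sub_X_pow_mul_one_add_X_pow {n s : ℕ} (hs : s ≤ n) :
    reflect n ((1 - X) ^ s * (1 + X) ^ (n - s) : ℤ[X]) = (X - 1) ^ s * (X + 1) ^ (n - s) := by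
  have h1 : (1 - X : ℤ[X]).natDegree ≤ 1 := by compute_degree!
  have h2 : (1 + X : ℤ[X]).natDegree ≤ 1 := by compute_degree!
  have := reflect_mul _ _ (natDegree_pow_le_of_le s h1) (natDegree_pow_le_of_le (n - s) h2)
  rw [reflect_pow h1, reflect_pow h2, mul_one, mul_one, Nat.add_sub_cancel' hs] at this
  simp [this, reflect_sub, reflect_add, reflect_one]

theorem Polynomial.coeff_comp_X_add_one {R : Type*} [CommRing R] {p : R[X]} {n : ℕ}
    (hp : p.natDegree ≤ n) (a : ℕ) :
    (p.comp (X + 1)).coeff a = ∑ m ∈ range (n + 1), p.coeff m * m.choose a := by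
  conv_lhs => rw [p.as_sum_range' (n + 1) (Nat.lt_succ_of_le hp)]
  simp [Polynomial.sum_comp, finsetSum_coeff, coeff_X_add_one_pow]

lemma sum_choose_mul_kraw {n a s : ℕ} (ha : a ≤ n) (hs : s ≤ n) :
    ∑ i ∈ range (n + 1), ((n - i).choose a : ℤ) * kraw n i s
      = 2 ^ (n - a) * (n - s).choose (n - a) := by
  set P : ℤ[X] := (1 - X) ^ s * (1 + X) ^ (n - s)
  have hP : P.natDegree ≤ n := by
    have h1 : (1 - X : ℤ[X]).natDegree ≤ 1 := by compute_degree!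
    have h2 : (1 + X : ℤ[X]).natDegree ≤ 1 := by compute_degree!
    refine (natDegree_mul_le_of_le (natDegree_pow_le_of_le s h1)
      (natDegree_pow_le_of_le (n - s) h2)).trans ?_
    omega
  calc ∑ i ∈ range (n + 1), ((n - i).choose a : ℤ) * kraw n i s
      = ∑ m ∈ range (n + 1), (reflect n P).coeff m * m.choose a := by
        rw [← sum_range_reflect]
        refine sum_congr rfl fun i hi => ?_
        have hi : i ≤ n := Nat.lt_succ_iff.mp (mem_range.mp hi)
        rw [coeff_reflect, revAt_le (by omega), kraw_eq_coeff, Nat.add_sub_cancel,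
          Nat.sub_sub_self hi, mul_comm]
    _ = ((reflect n P).comp (X + 1)).coeff a :=
        (coeff_comp_X_add_one (natDegree_reflect_le.trans (max_le le_rfl hP)) a).symm
    _ = (X ^ s * (X + C 2) ^ (n - s) : ℤ[X]).coeff a := by
        rw [reflect_one_sub_X_pow_mul_one_add_X_pow hs]
        congr 1
        simp only [mul_comp, pow_comp, sub_comp, add_comp, X_comp, one_comp, C_ofNat]
        ring
    _ = 2 ^ (n - a) * (n - s).choose (n - a) := by
        rw [coeff_X_pow_mul', coeff_X_add_C_pow]
        split_ifs with hsa
        · rw [Nat.choose_symm_of_eq_add (by omega : n - s = (a - s) + (n - a)),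
            show n - s - (a - s) = n - a by omega]
        · rw [Nat.choose_eq_zero_of_lt (by omega : n - s < n - a)]
          simp

theorem Nat.choose_mul_choose_sub_comm (n b s : ℕ) :
    n.choose b * (n - b).choose s = n.choose s * (n - s).choose b := by
  have h := @Nat.choose_mul n (b + s) s (by omega)
  rw [← Nat.choose_symm_add, Nat.choose_mul (by omega)] at h
  simpa using h

theorem Nat.choose_sub_mul_choose_le {n k b s : ℕ} (hsk : s ≤ k) (hkb : k + b ≤ n) :
    (n - s).choose (k - s) * n.choose b ≤ n.choose k * (n - s).choose b := by
  refine Nat.le_of_mul_le_mul_left ?_ (Nat.choose_pos (by omega : s ≤ n))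
  calc n.choose s * ((n - s).choose (k - s) * n.choose b)
      = n.choose k * n.choose b * k.choose s := by rw [← mul_assoc, ← Nat.choose_mul hsk]; ring
    _ ≤ n.choose k * n.choose b * (n - b).choose s :=
        Nat.mul_le_mul_left _ (Nat.choose_le_choose s (by omega))
    _ = n.choose s * (n.choose k * (n - s).choose b) := by
        rw [mul_assoc, Nat.choose_mul_choose_sub_comm]; ring

theorem Nat.choose_mul_choose_le_choose_mul_choose {n a b r s : ℕ} (hr : r ≤ a) (hs : s ≤ b)
    (hab : a + b ≤ n) :
    (n - r).choose (n - a) * (n - s).choose (n - b) ≤ (n - r).choose b * (n - s).choose a := by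
  have h₁ := Nat.choose_sub_mul_choose_le (n := n) (k := a) (b := b) hr (by omega)
  have h₂ := Nat.choose_sub_mul_choose_le (n := n) (k := b) (b := a) hs (by omega)
  rw [← Nat.choose_symm_of_eq_add (by omega : n - r = (n - a) + (a - r))] at h₁
  rw [← Nat.choose_symm_of_eq_add (by omega : n - s = (n - b) + (b - s))] at h₂
  refine Nat.le_of_mul_le_mul_right ?_ (Nat.mul_pos (Nat.choose_pos (by omega : a ≤ n))
    (Nat.choose_pos (by omega : b ≤ n)))
  calc (n - r).choose (n - a) * (n - s).choose (n - b) * (n.choose a * n.choose b)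
      = ((n - r).choose (n - a) * n.choose b) * ((n - s).choose (n - b) * n.choose a) := by ring
    _ ≤ (n.choose a * (n - r).choose b) * (n.choose b * (n - s).choose a) := Nat.mul_le_mul h₁ h₂
    _ = (n - r).choose b * (n - s).choose a * (n.choose a * n.choose b) := by ring

theorem sum_sum_mul_eq_of_eq_transform {ι : Type*} {I : Finset ι} {M C Cp : ι → ι → ℝ} {c : ℝ}
    (hC : ∀ i ∈ I, ∀ j ∈ I, C i j = c * ∑ r ∈ I, ∑ s ∈ I, M i s * M j r * Cp r s)
    (u v : ι → ℝ) :
    ∑ i ∈ I, ∑ j ∈ I, u i * v j * C i j =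
      c * ∑ r ∈ I, ∑ s ∈ I, (∑ j ∈ I, v j * M j r) * (∑ i ∈ I, u i * M i s) * Cp r s := by
  have rotate (g : ι → ι → ι → ℝ) :
      ∑ x ∈ I, ∑ r ∈ I, ∑ s ∈ I, g x r s = ∑ r ∈ I, ∑ s ∈ I, ∑ x ∈ I, g x r s := by
    rw [sum_comm]; exact sum_congr rfl fun r _ => sum_comm
  set f : ι → ι → ι → ι → ℝ := fun i j r s => c * (v j * M j r * (u i * M i s) * Cp r s)
  calc ∑ i ∈ I, ∑ j ∈ I, u i * v j * C i j
      = ∑ i ∈ I, ∑ j ∈ I, ∑ r ∈ I, ∑ s ∈ I, f i j r s := by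
        refine sum_congr rfl fun i hi => sum_congr rfl fun j hj => ?_
        rw [hC i hi j hj, mul_sum]
        simp_rw [mul_sum]
        congr! 2 with r _ s _
        simp only [f]
        ring
    _ = ∑ i ∈ I, ∑ r ∈ I, ∑ s ∈ I, ∑ j ∈ I, f i j r s :=
        sum_congr rfl fun i _ => rotate (f i)
    _ = ∑ r ∈ I, ∑ s ∈ I, ∑ i ∈ I, ∑ j ∈ I, f i j r s :=
        rotate fun i r s => ∑ j ∈ I, f i j r s
    _ = _ := by simp only [f, mul_sum, sum_mul]

namespace QuantumSingleton

/- `alpha n a b` and `dualAlpha n a b` are the paper's `α_{i,j}` and `f(r, s)` for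
`a = d_x - 1`, `b = d_z - 1`, both multiplied by `C(n, n - a) C(n, n - b)`:
`∏_{t = a + 1}^{n} (1 - x / t) = C(n - x, n - a) / C(n, n - a)`. -/
def alpha (n a b i j : ℕ) : ℝ := (n - i).choose b * (n - j).choose a

def dualAlpha (n a b r s : ℕ) : ℝ :=
  2 ^ (n - a) * (n - r).choose (n - a) * (2 ^ (n - b) * (n - s).choose (n - b))

def alphaSum (n a b : ℕ) (F : ℕ → ℕ → ℝ) : ℝ :=
  ∑ i ∈ range (a + 1), ∑ j ∈ range (b + 1), alpha n a b i j * F i j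

variable {n a b : ℕ} {c : ℝ} {C Cp : ℕ → ℕ → ℝ}

lemma sum_alpha_mul_eq_sum_dualAlpha_mul (ha : a ≤ n) (hb : b ≤ n)
    (hd : ∀ i j, i ≤ n → j ≤ n → C i j = c *
      ∑ r ∈ range (n + 1), ∑ s ∈ range (n + 1), (kraw n i s : ℝ) * (kraw n j r : ℝ) * Cp r s) :
    ∑ i ∈ range (n + 1), ∑ j ∈ range (n + 1), alpha n a b i j * C i j =
      c * ∑ r ∈ range (n + 1), ∑ s ∈ range (n + 1), dualAlpha n a b r s * Cp r s := by
  have column {a : ℕ} (ha : a ≤ n) (r : ℕ) (hr : r ∈ range (n + 1)) :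
      ∑ j ∈ range (n + 1), ((n - j).choose a : ℝ) * (kraw n j r : ℝ) =
        2 ^ (n - a) * (n - r).choose (n - a) := by
    exact_mod_cast sum_choose_mul_kraw ha (Nat.lt_succ_iff.mp (mem_range.mp hr))
  refine (sum_sum_mul_eq_of_eq_transform (M := fun i s => (kraw n i s : ℝ))
    (fun i hi j hj => hd i j (Nat.lt_succ_iff.mp (mem_range.mp hi))
      (Nat.lt_succ_iff.mp (mem_range.mp hj))) _ _).trans ?_
  simp only [dualAlpha]
  congr 1
  refine sum_congr rfl fun r hr => sum_congr rfl fun s hs => ?_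
  rw [column ha r hr, column hb s hs]

lemma dualAlpha_eq_zero {r s : ℕ} (h : a < r ∨ b < s) (hr : r ≤ n) (hs : s ≤ n) :
    dualAlpha n a b r s = 0 := by
  rcases h with h | h
  · simp [dualAlpha, Nat.choose_eq_zero_of_lt (by omega : n - r < n - a)]
  · simp [dualAlpha, Nat.choose_eq_zero_of_lt (by omega : n - s < n - b)]

lemma dualAlpha_le {r s : ℕ} (hr : r ≤ a) (hs : s ≤ b) (hab : a + b ≤ n) :
    dualAlpha n a b r s ≤ 2 ^ (n - a) * 2 ^ (n - b) * alpha n a b r s := by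
  have h : ((n - r).choose (n - a) * (n - s).choose (n - b) : ℝ) ≤
      (n - r).choose b * (n - s).choose a := by
    exact_mod_cast Nat.choose_mul_choose_le_choose_mul_choose hr hs hab
  calc dualAlpha n a b r s
      = 2 ^ (n - a) * 2 ^ (n - b) * ((n - r).choose (n - a) * (n - s).choose (n - b) : ℝ) := by
        simp only [dualAlpha]; ring
    _ ≤ 2 ^ (n - a) * 2 ^ (n - b) * alpha n a b r s := by
        gcongr
        exact h

lemma alpha_nonneg (i j : ℕ) : 0 ≤ alpha n a b i j := by
  unfold alpha; positivity

lemma alphaSum_pos {F : ℕ → ℕ → ℝ} (ha : a ≤ n) (hb : b ≤ n)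
    (hF : ∀ i ≤ a, ∀ j ≤ b, 0 ≤ F i j) (h₀ : 0 < F 0 0) : 0 < alphaSum n a b F := by
  have hα₀ : 0 < alpha n a b 0 0 := by
    unfold alpha
    have := Nat.choose_pos ha
    have := Nat.choose_pos hb
    positivity
  have term_nonneg {i j : ℕ} (hi : i ∈ range (a + 1)) (hj : j ∈ range (b + 1)) :
      0 ≤ alpha n a b i j * F i j :=
    mul_nonneg (alpha_nonneg i j) (hF i (by simpa [Nat.lt_succ_iff] using hi) j
      (by simpa [Nat.lt_succ_iff] using hj))
  refine sum_pos' (fun i hi => sum_nonneg fun j hj => term_nonneg hi hj)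
    ⟨0, by simp, sum_pos' (fun j hj => term_nonneg (by simp) hj) ⟨0, by simp, ?_⟩⟩
  exact mul_pos hα₀ h₀

lemma alphaSum_le_mul_alphaSum (hab : a + b ≤ n) (hc : 0 ≤ c)
    (hC : ∀ i j, i ≤ n → j ≤ n → 0 ≤ C i j) (hCCp : ∀ i ≤ a, ∀ j ≤ b, C i j = Cp i j)
    (hd : ∀ i j, i ≤ n → j ≤ n → C i j = c *
      ∑ r ∈ range (n + 1), ∑ s ∈ range (n + 1), (kraw n i s : ℝ) * (kraw n j r : ℝ) * Cp r s) :
    alphaSum n a b Cp ≤ c * (2 ^ (n - a) * 2 ^ (n - b)) * alphaSum n a b Cp := by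
  have hCp {r s : ℕ} (hr : r ∈ range (a + 1)) (hs : s ∈ range (b + 1)) : 0 ≤ Cp r s := by
    rw [mem_range, Nat.lt_succ_iff] at hr hs
    exact hCCp r hr s hs ▸ hC r s (by omega) (by omega)
  calc alphaSum n a b Cp
      = ∑ i ∈ range (a + 1), ∑ j ∈ range (b + 1), alpha n a b i j * C i j := by
        refine sum_congr rfl fun i hi => sum_congr rfl fun j hj => ?_
        rw [mem_range, Nat.lt_succ_iff] at hi hj
        rw [hCCp i hi j hj]
    _ ≤ ∑ i ∈ range (n + 1), ∑ j ∈ range (n + 1), alpha n a b i j * C i j := by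
        simp only [← sum_product']
        refine sum_le_sum_of_subset_of_nonneg
          (product_subset_product (range_subset_range.2 (by omega))
            (range_subset_range.2 (by omega))) fun p hp _ => ?_
        simp only [mem_product, mem_range, Nat.lt_succ_iff] at hp
        exact mul_nonneg (alpha_nonneg _ _) (hC _ _ hp.1 hp.2)
    _ = c * ∑ r ∈ range (n + 1), ∑ s ∈ range (n + 1), dualAlpha n a b r s * Cp r s :=
        sum_alpha_mul_eq_sum_dualAlpha_mul (by omega) (by omega) hd
    _ = c * ∑ r ∈ range (a + 1), ∑ s ∈ range (b + 1), dualAlpha n a b r s * Cp r s := by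
        simp only [← sum_product']
        refine congrArg _ (sum_subset (product_subset_product (range_subset_range.2 (by omega))
            (range_subset_range.2 (by omega))) fun p hp hp' => ?_).symm
        simp only [mem_product, mem_range, Nat.lt_succ_iff, not_and_or, not_le] at hp hp'
        rw [dualAlpha_eq_zero hp' hp.1 hp.2, zero_mul]
    _ ≤ c * ∑ r ∈ range (a + 1), ∑ s ∈ range (b + 1),
          2 ^ (n - a) * 2 ^ (n - b) * alpha n a b r s * Cp r s := by
        gcongr with r hr s hs
        · exact hCp hr hs
        · exact dualAlpha_le (by simpa [Nat.lt_succ_iff] using hr)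
            (by simpa [Nat.lt_succ_iff] using hs) hab
    _ = c * (2 ^ (n - a) * 2 ^ (n - b)) * alphaSum n a b Cp := by
        simp only [alphaSum, mul_sum, mul_assoc]

end QuantumSingleton

/-- Abstract quantum Singleton bound: under hypotheses (a)–(d) of the key
linear-programming inequality, and `d_x, d_z ≤ n/2 + 1`, one has
`K ≤ 2^(n - d_x - d_z + 2)`; in particular if `K = 2^k` then
`n ≥ k + d_x + d_z - 2`. -/
theorem quantum_singleton_bound (n dx dz : ℕ) (hdx : 1 ≤ dx) (hdz : 1 ≤ dz)
    (hdx2 : 2 * dx ≤ n + 2) (hdz2 : 2 * dz ≤ n + 2)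
    (K : ℝ) (hK : 0 < K)
    (C Cp : ℕ → ℕ → ℝ)
    (ha : ∀ r s, r ≤ n → s ≤ n → 0 ≤ C r s ∧ C r s ≤ Cp r s)
    (hb : C 0 0 = 1 ∧ Cp 0 0 = 1)
    (hc : ∀ r s, r < dx → s < dz → C r s = Cp r s)
    (hd : ∀ i j, i ≤ n → j ≤ n →
      C i j = (1 / (2 ^ n * K)) *
        ∑ r ∈ Finset.range (n + 1), ∑ s ∈ Finset.range (n + 1),
          (kraw n i s : ℝ) * (kraw n j r : ℝ) * Cp r s) :
    K ≤ (2 : ℝ) ^ ((n : ℤ) - dx - dz + 2) ∧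
      (∀ k : ℕ, K = 2 ^ k → (k : ℤ) + dx + dz - 2 ≤ (n : ℤ)) := by
  obtain ⟨a, rfl⟩ : ∃ a, dx = a + 1 := ⟨dx - 1, by omega⟩
  obtain ⟨b, rfl⟩ : ∃ b, dz = b + 1 := ⟨dz - 1, by omega⟩
  have hCCp : ∀ i ≤ a, ∀ j ≤ b, C i j = Cp i j := fun i hi j hj => hc i j (by omega) (by omega)
  have hW := QuantumSingleton.alphaSum_pos (n := n) (by omega) (by omega)
    (fun i hi j hj => hCCp i hi j hj ▸ (ha i j (by omega) (by omega)).1) (hb.2 ▸ one_pos)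
  have hLP := QuantumSingleton.alphaSum_le_mul_alphaSum (by omega) (by positivity)
    (fun i j hi hj => (ha i j hi hj).1) hCCp hd
  have hpow : (2 : ℝ) ^ (n - a) * 2 ^ (n - b) = 2 ^ n * 2 ^ (n - a - b) := by
    rw [← pow_add, ← pow_add]; congr 1; omega
  have hK' : K ≤ 2 ^ (n - a - b) := by
    rw [hpow, le_mul_iff_one_le_left hW, one_div, ← div_eq_inv_mul,
      le_div_iff₀ (by positivity), one_mul] at hLP
    exact le_of_mul_le_mul_left hLP (by positivity)
  refine ⟨?_, fun k hk => ?_⟩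
  · rwa [show (n : ℤ) - ↑(a + 1) - ↑(b + 1) + 2 = ((n - a - b : ℕ) : ℤ) by omega, zpow_natCast]
  · rw [hk] at hK'
    have := (pow_le_pow_iff_right₀ (one_lt_two : (1 : ℝ) < 2)).1 hK'
    omega
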